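/- arXiv:2412.19541 — 13 statements merged into one kernel-verified Lean document; each statement's English description precedes it below -/
import Mathlib

section
/- Let n ≥ 1, 0 < p < 1, γ > 0, and y ∈ ℝ^n with ∑_{i=1}^n |y_i|^p > γ. If x* is an optimal solution of the ℓ_p quasi-norm ball projection problem (i.e., x* satisfies ∑_{i=1}^n |x*_i|^p ≤ γ and ‖x* − y‖₂ ≤ ‖x − y‖₂ for every x ∈ ℝ^n with ∑_{i=1}^n |x_i|^p ≤ γ), then ∑_{i=1}^n |x*_i|^p = γ. -/
theorem stmt_0 (n : ℕ) (hn : 1 ≤ n) (p γ : ℝ) (hp0 : 0 < p) (hp1 : p < 1) (hγ : 0 < γ)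
    (y : EuclideanSpace ℝ (Fin n)) (hy : γ < ∑ i, |y i| ^ p)
    (xs : EuclideanSpace ℝ (Fin n))
    (hfeas : ∑ i, |xs i| ^ p ≤ γ)
    (hopt : ∀ x : EuclideanSpace ℝ (Fin n), (∑ i, |x i| ^ p) ≤ γ → ‖xs - y‖ ≤ ‖x - y‖) :
    ∑ i, |xs i| ^ p = γ := by
  by_contra h
  have hlt : ∑ i, |xs i| ^ p < γ := lt_of_le_of_ne hfeas h
  have hne : xs ≠ y := by
    intro hxy
    rw [hxy] at hlt
    exact absurd hy (not_lt.mpr hlt.le)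
  have hnorm : 0 < ‖xs - y‖ := by
    rw [norm_pos_iff]
    exact sub_ne_zero.mpr hne
  set F : ℝ → ℝ := fun t => ∑ i, |xs i + t * (y i - xs i)| ^ p with hF
  have hcont : ContinuousAt F 0 := by
    apply tendsto_finset_sum
    intro i _
    have h1 : ContinuousAt (fun t : ℝ => |xs i + t * (y i - xs i)|) 0 :=
      (continuous_abs.comp (by continuity)).continuousAt
    exact (Real.continuousAt_rpow_const _ _ (Or.inr hp0.le)).comp h1
  have hF0 : F 0 < γ := by simp [hF, hlt]
  have h1 : ∀ᶠ t in nhdsWithin (0:ℝ) (Set.Ioi 0), F t < γ :=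
    nhdsWithin_le_nhds (hcont.eventually_lt continuousAt_const hF0)
  have h2 : ∀ᶠ t in nhdsWithin (0:ℝ) (Set.Ioi 0), t < 1 :=
    nhdsWithin_le_nhds (eventually_lt_nhds one_pos)
  have h3 : ∀ᶠ t in nhdsWithin (0:ℝ) (Set.Ioi 0), 0 < t := eventually_mem_nhdsWithin
  obtain ⟨t, htγ, ht1, ht0⟩ := (h1.and (h2.and h3)).exists
  set x : EuclideanSpace ℝ (Fin n) := xs + t • (y - xs) with hx
  have hxi : ∀ i, x i = xs i + t * (y i - xs i) := by
    intro i
    simp [hx]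
  have hfx : ∑ i, |x i| ^ p ≤ γ := by
    have : ∑ i, |x i| ^ p = F t := by
      simp only [hF]
      exact Finset.sum_congr rfl fun i _ => by rw [hxi i]
    rw [this]; exact htγ.le
  have hkey := hopt x hfx
  have hxy : x - y = (1 - t) • (xs - y) := by
    rw [hx]
    module
  rw [hxy, norm_smul] at hkey
  have : ‖(1 - t : ℝ)‖ = 1 - t := by
    rw [Real.norm_eq_abs, abs_of_pos (by linarith)]
  rw [this] at hkey
  nlinarith
end

section
/- Let n ≥ 1, 0 < p < 1, γ > 0, and y ∈ ℝ^n with ∑_{i=1}^n |y_i|^p > γ. If x* is an optimal solution of the ℓ_p quasi-norm ball projection problem, then for every index i one has x*_i · y_i ≥ 0 and |x*_i| ≤ |y_i|. -/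
theorem stmt_1 (n : ℕ) (hn : 1 ≤ n) (p γ : ℝ) (hp0 : 0 < p) (hp1 : p < 1) (hγ : 0 < γ)
    (y : EuclideanSpace ℝ (Fin n)) (hy : γ < ∑ i, |y i| ^ p)
    (xs : EuclideanSpace ℝ (Fin n))
    (hfeas : ∑ i, |xs i| ^ p ≤ γ)
    (hopt : ∀ x : EuclideanSpace ℝ (Fin n), (∑ i, |x i| ^ p) ≤ γ → ‖xs - y‖ ≤ ‖x - y‖) :
    ∀ i : Fin n, xs i * y i ≥ 0 ∧ |xs i| ≤ |y i| := by
  intro i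
  have key : ∀ z : ℝ, |z| ≤ |xs i| → |z - y i| < |xs i - y i| → False := by
    intro z hz hzy
    set x : EuclideanSpace ℝ (Fin n) := WithLp.toLp 2 (Function.update xs i z) with hx
    have hxj : ∀ j, x j = if j = i then z else xs j := by
      intro j
      by_cases hj : j = i
      · subst hj; simp [hx]
      · simp [hx, Function.update_of_ne hj, if_neg hj]
    have hfx : ∑ j, |x j| ^ p ≤ γ := by
      calc ∑ j, |x j| ^ p ≤ ∑ j, |xs j| ^ p := by
            apply Finset.sum_le_sum
            intro j _
            by_cases hj : j = i
            · subst hj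
              rw [hxj]; simp only [if_pos rfl]
              exact Real.rpow_le_rpow (abs_nonneg z) hz hp0.le
            · rw [hxj]; simp [hj]
        _ ≤ γ := hfeas
    have hlt : ‖x - y‖ < ‖xs - y‖ := by
      rw [EuclideanSpace.norm_eq, EuclideanSpace.norm_eq]
      apply Real.sqrt_lt_sqrt (by positivity)
      apply Finset.sum_lt_sum
      · intro j _
        by_cases hj : j = i
        · subst hj
          simp only [PiLp.sub_apply, Real.norm_eq_abs, hxj, if_pos rfl]
          exact pow_le_pow_left₀ (abs_nonneg _) hzy.le 2
        · simp [PiLp.sub_apply, hxj, hj]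
      · exact ⟨i, Finset.mem_univ i, by
          simp only [PiLp.sub_apply, Real.norm_eq_abs, hxj, if_pos rfl]
          exact pow_lt_pow_left₀ hzy (abs_nonneg _) two_ne_zero⟩
    have := hopt x hfx
    linarith
  by_cases hs : xs i * y i ≥ 0
  · refine ⟨hs, ?_⟩
    by_contra h2
    push_neg at h2
    refine key (y i) h2.le ?_
    rw [sub_self, abs_zero]
    exact abs_pos.mpr (sub_ne_zero.mpr (fun he => by rw [he] at h2; exact lt_irrefl _ h2))
  · push_neg at hs
    exfalso
    apply key 0 (by simp)
    rw [zero_sub, abs_neg]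
    rcases mul_neg_iff.mp hs with ⟨ha, hb⟩ | ⟨ha, hb⟩
    · rw [abs_of_neg hb, abs_of_pos (by linarith : 0 < xs i - y i)]; linarith
    · rw [abs_of_pos hb, abs_of_neg (by linarith : xs i - y i < 0)]; linarith
end

section
/- For every u > 0, the function t ↦ φ(|t|; u) is Lipschitz continuous on ℝ with Lipschitz constant p·u; that is, |φ(|t|; u) − φ(|t'|; u)| ≤ p·u·|t − t'| for all t, t' ∈ ℝ. -/
/-- The concave surrogate `φ(t; u)`: equals `t ^ p` for `t > u ^ (q-1)` and the
linear function `p * (t * u - u ^ q / q)` for `0 ≤ t ≤ u ^ (q-1)`. -/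
noncomputable def phi (p q u t : ℝ) : ℝ :=
  if u ^ (q - 1) < t then t ^ p else p * (t * u - u ^ q / q)

theorem stmt_4 (p q : ℝ) (hp0 : 0 < p) (hp1 : p < 1) (hq : q = p / (p - 1))
    (u : ℝ) (hu : 0 < u) :
    ∀ t t' : ℝ, abs (phi p q u |t| - phi p q u |t'|) ≤ p * u * |t - t'| := by
  have hp1' : p - 1 < 0 := by linarith
  have hp1ne : p - 1 ≠ 0 := ne_of_lt hp1'
  set c : ℝ := u ^ (q - 1) with hc
  have hcpos : 0 < c := Real.rpow_pos_of_pos hu _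
  have hq1 : q - 1 = 1 / (p - 1) := by rw [hq]; field_simp; ring
  have hq0 : q ≠ 0 := by
    rw [hq]; exact div_ne_zero (ne_of_gt hp0) hp1ne
  -- c ^ (p - 1) = u
  have hcp1 : c ^ (p - 1) = u := by
    rw [hc, ← Real.rpow_mul hu.le]
    have : (q - 1) * (p - 1) = 1 := by rw [hq1]; field_simp
    rw [this, Real.rpow_one]
  -- junction: c ^ p = p * (c * u - u ^ q / q)
  have hjun : c ^ p = p * (c * u - u ^ q / q) := by
    have h1 : c ^ p = u ^ q := by
      rw [hc, ← Real.rpow_mul hu.le]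
      congr 1
      rw [hq1, hq]; field_simp
    have h2 : c * u = u ^ q := by
      rw [hc, ← Real.rpow_add_one (ne_of_gt hu)]
      ring_nf
    have h3 : (1 : ℝ) - 1 / q = 1 / p := by
      rw [hq]; field_simp; ring
    rw [h1, h2]
    have : p * (u ^ q - u ^ q / q) = p * (u ^ q * (1 - 1 / q)) := by ring
    rw [this, h3]
    field_simp
  set f : ℝ → ℝ := phi p q u with hf
  -- the linear part has derivative p * u everywhere
  have hlin : ∀ x : ℝ, HasDerivAt (fun s => p * (s * u - u ^ q / q)) (p * u) x := by
    intro x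
    have : HasDerivAt (fun s : ℝ => s * u - u ^ q / q) u x := by
      simpa using ((hasDerivAt_id x).mul_const u).sub_const (u ^ q / q)
    simpa [mul_comm] using this.const_mul p
  -- derivative of f
  set D : ℝ → ℝ := fun t => if t ≤ c then p * u else p * t ^ (p - 1) with hD
  have hderiv : ∀ x ∈ Set.Ici (0 : ℝ), HasDerivWithinAt f (D x) (Set.Ici 0) x := by
    intro x hx
    rcases lt_trichotomy x c with hxc | hxc | hxc
    · -- x < c : f is the linear function on a neighborhood
      have hDx : D x = p * u := by simp [hD, hxc.le]
      rw [hDx]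
      refine HasDerivAt.hasDerivWithinAt ?_
      refine (hlin x).congr_of_eventuallyEq ?_
      filter_upwards [Iio_mem_nhds hxc] with s hs
      have hs' : s < c := hs
      simp [hf, phi, ← hc, not_lt.mpr hs'.le]
    · -- x = c : glue
      subst hxc
      have hDx : D c = p * u := by simp [hD]
      rw [hDx]
      have hIic : HasDerivWithinAt f (p * u) (Set.Iic c) c := by
        refine ((hlin c).hasDerivWithinAt).congr ?_ ?_
        · intro s hs
          have hs' : s ≤ c := hs
          simp [hf, phi, ← hc, not_lt.mpr hs']
        · simp [hf, phi, ← hc, lt_irrefl]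
      have hIci : HasDerivWithinAt f (p * u) (Set.Ici c) c := by
        have hrd : HasDerivAt (fun s : ℝ => s ^ p) (p * u) c := by
          have := Real.hasDerivAt_rpow_const (x := c) (p := p) (Or.inl (ne_of_gt hcpos))
          rwa [hcp1] at this
        refine (hrd.hasDerivWithinAt).congr ?_ ?_
        · intro s hs
          rcases eq_or_lt_of_le (Set.mem_Ici.mp hs) with h | h
          · simp [hf, phi, ← hc, ← h, lt_irrefl, hjun]
          · simp [hf, phi, ← hc, h]
        · simp [hf, phi, ← hc, lt_irrefl, hjun]
      have := hIic.union hIci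
      rw [Set.Iic_union_Ici] at this
      exact (hasDerivWithinAt_univ.mp this).hasDerivWithinAt
    · -- c < x : f is the rpow on a neighborhood
      have hDx : D x = p * x ^ (p - 1) := by simp [hD, not_le.mpr hxc]
      rw [hDx]
      refine HasDerivAt.hasDerivWithinAt ?_
      have hrd : HasDerivAt (fun s : ℝ => s ^ p) (p * x ^ (p - 1)) x :=
        Real.hasDerivAt_rpow_const (Or.inl (ne_of_gt (hcpos.trans hxc)))
      refine hrd.congr_of_eventuallyEq ?_
      filter_upwards [Ioi_mem_nhds hxc] with s hs
      have hs' : c < s := hs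
      simp [hf, phi, ← hc, hs']
  have hbound : ∀ x ∈ Set.Ici (0 : ℝ), ‖D x‖ ≤ p * u := by
    intro x _
    rw [Real.norm_eq_abs]
    by_cases hxc : x ≤ c
    · simp [hD, hxc, abs_of_nonneg (mul_nonneg hp0.le hu.le)]
    · push_neg at hxc
      have hx0 : 0 < x := hcpos.trans hxc
      have h1 : x ^ (p - 1) ≤ u := by
        rw [← hcp1]
        exact Real.rpow_le_rpow_of_nonpos hcpos hxc.le hp1'.le
      have h2 : 0 ≤ p * x ^ (p - 1) := mul_nonneg hp0.le (Real.rpow_nonneg hx0.le _)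
      simp only [hD, if_neg (not_le.mpr hxc)]
      rw [abs_of_nonneg h2]
      exact mul_le_mul_of_nonneg_left h1 hp0.le
  intro t t'
  have hLip := Convex.norm_image_sub_le_of_norm_hasDerivWithin_le hderiv hbound
    (convex_Ici 0) (Set.mem_Ici.mpr (abs_nonneg t')) (Set.mem_Ici.mpr (abs_nonneg t))
  rw [Real.norm_eq_abs, Real.norm_eq_abs] at hLip
  refine le_trans hLip ?_
  exact mul_le_mul_of_nonneg_left (abs_abs_sub_abs_le_abs_sub t t')
    (mul_nonneg hp0.le hu.le)
end

section
/- For every u > 0 and every t ∈ ℝ, one has 0 ≤ φ(|t|; u) − |t|^p ≤ u^q. -/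
theorem stmt_5 (p q : ℝ) (hp0 : 0 < p) (hp1 : p < 1) (hq : q = p / (p - 1))
    (u : ℝ) (hu : 0 < u) (t : ℝ) :
    0 ≤ phi p q u |t| - |t| ^ p ∧ phi p q u |t| - |t| ^ p ≤ u ^ q := by
  have hp1' : p - 1 ≠ 0 := by intro h; nlinarith
  have hpne : p ≠ 0 := ne_of_gt hp0
  have hqne : q ≠ 0 := by rw [hq]; exact div_ne_zero hpne hp1'
  set s := |t| with hs
  have hs0 : (0:ℝ) ≤ s := abs_nonneg t
  have huq : (0:ℝ) < u ^ q := Real.rpow_pos_of_pos hu q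
  unfold phi
  by_cases h : u ^ (q - 1) < s
  · rw [if_pos h]
    constructor <;> simp <;> linarith
  · push_neg at h
    rw [if_neg (not_lt.mpr h)]
    have key : p * (s * u - u ^ q / q) = p * (u * s) + (1 - p) * u ^ q := by
      rw [hq]; field_simp; ring
    -- Lower bound via weighted AM-GM
    have hus : (0:ℝ) ≤ u * s := mul_nonneg hu.le hs0
    have amgm : (u * s) ^ p * (u ^ q) ^ (1 - p) ≤ p * (u * s) + (1 - p) * (u ^ q) :=
      Real.geom_mean_le_arith_mean2_weighted hp0.le (by linarith) hus huq.le (by ring)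
    have hqp : q * (1 - p) = -p := by rw [hq]; field_simp; ring
    have heq : (u * s) ^ p * (u ^ q) ^ (1 - p) = s ^ p := by
      rw [Real.mul_rpow hu.le hs0, ← Real.rpow_mul hu.le, hqp]
      rw [mul_assoc, mul_comm (s ^ p), ← mul_assoc, ← Real.rpow_add hu]
      simp
    constructor
    · rw [key]; rw [heq] at amgm; linarith
    · -- Upper bound: p*u*s ≤ p*u^q since s ≤ u^(q-1)
      have h1 : u * u ^ (q - 1) = u ^ q := by
        have h := (Real.rpow_add hu 1 (q - 1)).symm
        rw [Real.rpow_one] at h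
        rw [h]; ring_nf
      have h2 : p * (u * s) ≤ p * u ^ q := by
        rw [← h1]
        have : u * s ≤ u * u ^ (q - 1) := by
          apply mul_le_mul_of_nonneg_left h hu.le
        nlinarith
      have h3 : (0:ℝ) ≤ s ^ p := Real.rpow_nonneg hs0 p
      rw [key]; nlinarith
end

section
/- For every u > 0, the function t ↦ φ(t; u) is concave on [0, ∞); that is, for all t₁, t₂ ≥ 0 and θ ∈ [0, 1], φ(θ·t₁ + (1−θ)·t₂; u) ≥ θ·φ(t₁; u) + (1−θ)·φ(t₂; u). -/
/-- Bernoulli inequality for exponents in `[-1, 0]`. -/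
lemma bern_small {m : ℝ} (hm0 : 0 ≤ m) (hm1 : m ≤ 1) {y : ℝ} (hy : 0 < y) :
    1 - m * (y - 1) ≤ y ^ (-m) := by
  rcases le_or_gt (1 - m * (y - 1)) 0 with h | h
  · exact h.trans (Real.rpow_pos_of_pos hy _).le
  · have hb : y ^ m ≤ 1 + m * (y - 1) := by
      have := rpow_one_add_le_one_add_mul_self (s := y - 1) (by linarith) hm0 hm1
      simpa using this
    have hpos : (0:ℝ) < y ^ m := Real.rpow_pos_of_pos hy m
    have key : (1 - m * (y - 1)) * y ^ m ≤ 1 := by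
      calc (1 - m * (y - 1)) * y ^ m ≤ (1 - m * (y - 1)) * (1 + m * (y - 1)) :=
            mul_le_mul_of_nonneg_left hb h.le
        _ = 1 - (m * (y - 1)) ^ 2 := by ring
        _ ≤ 1 := by nlinarith [sq_nonneg (m * (y - 1))]
    have hinv : y ^ (-m) = (y ^ m)⁻¹ := Real.rpow_neg hy.le m
    have h3 := mul_le_mul_of_nonneg_right key (inv_pos.2 hpos).le
    rw [one_mul, mul_assoc, mul_inv_cancel₀ hpos.ne', mul_one] at h3
    rw [hinv]; exact h3

/-- Bernoulli inequality for negative exponents: `y ^ q ≥ 1 + q (y - 1)`. -/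
lemma bern_neg {q : ℝ} (hq : q < 0) {y : ℝ} (hy : 0 < y) :
    1 + q * (y - 1) ≤ y ^ q := by
  rcases le_or_gt (-1) q with hq1 | hq1
  · have := bern_small (m := -q) (by linarith) (by linarith) hy
    simpa using this
  · -- q < -1 : substitute z = y ^ q and use exponent 1/q ∈ (-1, 0)
    have hzpos : 0 < y ^ q := Real.rpow_pos_of_pos hy q
    have hqne : q ≠ 0 := hq.ne
    have hiq0 : (0:ℝ) ≤ -(1/q) := by
      have : 1/q < 0 := one_div_neg.mpr hq
      linarith
    have hiq1 : -(1/q) ≤ 1 := by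
      have h1 : (-1:ℝ) ≤ 1/q := by
        rw [le_div_iff_of_neg hq]; linarith
      linarith
    have hsub : (y ^ q) ^ (1/q) = y := by
      rw [← Real.rpow_mul hy.le, mul_one_div_cancel hqne, Real.rpow_one]
    have hb := bern_small hiq0 hiq1 hzpos
    rw [neg_neg, hsub] at hb
    -- hb : 1 - (-(1/q)) * (y ^ q - 1) ≤ y, i.e. 1 + (1/q)(y^q - 1) ≤ y
    have h2 : 1 + (1/q) * (y ^ q - 1) ≤ y := by linarith [hb]
    -- multiply by q < 0
    have h3 := mul_le_mul_of_nonpos_left h2 (le_of_lt hq)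
    have h4 : q * (1 + 1/q * (y ^ q - 1)) = q + (y ^ q - 1) := by field_simp
    rw [h4] at h3
    linarith

set_option maxHeartbeats 1000000 in
theorem stmt_6 (p q : ℝ) (hp0 : 0 < p) (hp1 : p < 1) (hq : q = p / (p - 1))
    (u : ℝ) (hu : 0 < u) :
    ∀ t₁ t₂ θ : ℝ, 0 ≤ t₁ → 0 ≤ t₂ → 0 ≤ θ → θ ≤ 1 →
      θ * phi p q u t₁ + (1 - θ) * phi p q u t₂ ≤ phi p q u (θ * t₁ + (1 - θ) * t₂) := by
  have hpm : p - 1 < 0 := by linarith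
  have hpm' : p - 1 ≠ 0 := hpm.ne
  have hqneg : q < 0 := by
    rw [hq]; exact div_neg_of_pos_of_neg hp0 hpm
  have hqne : q ≠ 0 := hqneg.ne
  have hqp : q * (p - 1) = p := by
    rw [hq]; field_simp
  have hpq1 : p * (q - 1) = q := by nlinarith
  have hqp1 : (q - 1) * (p - 1) = 1 := by nlinarith
  have hpdq : p / q = p - 1 := by
    field_simp; nlinarith
  -- Key lemma A: tangent bound
  have keyA : ∀ t : ℝ, 0 ≤ t → ∀ s : ℝ, 0 < s → s ≤ u →
      phi p q u t ≤ p * (t * s - s ^ q / q) := by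
    intro t ht s hs hsu
    unfold phi
    split_ifs with h
    · -- t > u^(q-1) > 0 : Young's inequality via Bernoulli
      have ht0 : 0 < t := lt_trans (Real.rpow_pos_of_pos hu _) h
      set r := t * s ^ (1 - q) with hr
      have hr0 : 0 < r := mul_pos ht0 (Real.rpow_pos_of_pos hs _)
      have hbern : r ^ p ≤ 1 + p * (r - 1) := by
        have := rpow_one_add_le_one_add_mul_self (s := r - 1) (by linarith) hp0.le hp1.le
        simpa using this
      have hexp : (1 - q) * p = -q := by nlinarith
      have hrp : r ^ p = t ^ p * s ^ (-q) := by
        rw [hr, Real.mul_rpow ht0.le (Real.rpow_pos_of_pos hs _).le,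
          ← Real.rpow_mul hs.le, hexp]
      have hsq : (0:ℝ) < s ^ q := Real.rpow_pos_of_pos hs q
      have hmul := mul_le_mul_of_nonneg_right hbern hsq.le
      rw [hrp] at hmul
      have hcanc : s ^ (-q) * s ^ q = 1 := by
        rw [← Real.rpow_add hs]; simp
      have hss : s ^ (1 - q) * s ^ q = s := by
        rw [← Real.rpow_add hs]; simp
      have hL : t ^ p * s ^ (-q) * s ^ q = t ^ p := by
        rw [mul_assoc, hcanc, mul_one]
      rw [hL] at hmul
      -- hmul : t^p ≤ (1 + p*(t * s^(1-q) - 1)) * s^q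
      have hRHS : (1 + p * (t * s ^ (1 - q) - 1)) * s ^ q = (1 - p) * s ^ q + p * t * s := by
        have : t * s ^ (1 - q) * s ^ q = t * s := by rw [mul_assoc, hss]
        nlinarith [this]
      rw [hRHS] at hmul
      have h1mp : (1:ℝ) - p = -(p / q) := by rw [hpdq]; ring
      calc t ^ p ≤ (1 - p) * s ^ q + p * t * s := hmul
        _ = p * (t * s - s ^ q / q) := by rw [h1mp]; field_simp; ring
    · -- t ≤ u^(q-1) : linear piece, use convexity of x^q (Bernoulli)
      push_neg at h
      have huq : (0:ℝ) < u ^ (q - 1) := Real.rpow_pos_of_pos hu _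
      have hyu : (0:ℝ) < s / u := div_pos hs hu
      have hb := bern_neg hqneg hyu
      have hsu' : (s / u) ^ q = s ^ q / u ^ q := Real.div_rpow hs.le hu.le q
      rw [hsu'] at hb
      have huqpos : (0:ℝ) < u ^ q := Real.rpow_pos_of_pos hu q
      -- hb : 1 + q * (s/u - 1) ≤ s^q / u^q ; multiply by u^q
      have hb2 : u ^ q * (1 + q * (s / u - 1)) ≤ s ^ q := by
        have := mul_le_mul_of_nonneg_left hb huqpos.le
        rwa [mul_div_cancel₀ _ huqpos.ne'] at this
      have huu : u ^ (q - 1) * u = u ^ q := by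
        rw [← Real.rpow_add_one hu.ne' (q-1)]; ring_nf
      -- u^q * (s/u) = u^(q-1) * s
      have hus : u ^ q * (s / u) = u ^ (q - 1) * s := by
        rw [← huu]; field_simp
      -- goal: p * (t*u - u^q/q) ≤ p * (t*s - s^q/q)
      apply mul_le_mul_of_nonneg_left _ hp0.le
      -- reduces to: t*(u-s) ≤ (u^q - s^q)/q
      rw [sub_le_sub_iff]
      -- t * u + s^q/q ≤ t * s + u^q/q
      have step1 : t * (u - s) ≤ u ^ (q - 1) * (u - s) :=
        mul_le_mul_of_nonneg_right h (by linarith)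
      have step2 : u ^ (q - 1) * (u - s) ≤ (u ^ q - s ^ q) / q := by
        rw [le_div_iff_of_neg hqneg]
        -- (u^q - s^q) ≤ q * (u^(q-1) * (u - s))  -- careful direction
        have expand : u ^ q * (1 + q * (s / u - 1)) = u ^ q + q * (u ^ (q-1) * s - u ^ q) := by
          rw [mul_add, mul_one, ← mul_assoc, mul_comm (u ^ q) q, mul_assoc, mul_sub,
            hus, mul_one]
        nlinarith [hb2, expand]
      have h5 := step1.trans step2
      rw [sub_div] at h5
      linarith
    -- end keyA
  -- Key lemma B: attainment
  have keyB : ∀ t : ℝ, 0 ≤ t → ∃ s : ℝ, 0 < s ∧ s ≤ u ∧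
      phi p q u t = p * (t * s - s ^ q / q) := by
    intro t ht
    by_cases h : u ^ (q - 1) < t
    · refine ⟨t ^ (p - 1), ?_, ?_, ?_⟩
      · exact Real.rpow_pos_of_pos (lt_trans (Real.rpow_pos_of_pos hu _) h) _
      · have ht0 : 0 < u ^ (q - 1) := Real.rpow_pos_of_pos hu _
        have hlt : t ^ (p - 1) < (u ^ (q - 1)) ^ (p - 1) :=
          Real.rpow_lt_rpow_of_neg ht0 h hpm
        rw [← Real.rpow_mul hu.le, hqp1, Real.rpow_one] at hlt
        exact hlt.le
      · have ht0 : 0 < t := lt_trans (Real.rpow_pos_of_pos hu _) h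
        rw [phi, if_pos h]
        have e1 : t * t ^ (p - 1) = t ^ p := by
          nth_rewrite 1 [← Real.rpow_one t]
          rw [← Real.rpow_add ht0]; ring_nf
        have e2 : (t ^ (p - 1)) ^ q = t ^ p := by
          rw [← Real.rpow_mul ht0.le]
          congr 1; nlinarith
        rw [e1, e2]
        have : p * (t ^ p - t ^ p / q) = t ^ p * (p * (1 - 1/q)) := by ring
        rw [this]
        have : p * (1 - 1/q) = 1 := by
          field_simp; nlinarith
        rw [this, mul_one]
    · exact ⟨u, hu, le_refl u, by rw [phi, if_neg h]⟩
  -- Main argument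
  intro t₁ t₂ θ ht₁ ht₂ hθ0 hθ1
  have ht0 : 0 ≤ θ * t₁ + (1 - θ) * t₂ := by
    have := mul_nonneg hθ0 ht₁
    have := mul_nonneg (by linarith : (0:ℝ) ≤ 1 - θ) ht₂
    linarith
  obtain ⟨s, hs, hsu, heq⟩ := keyB _ ht0
  have h1 := keyA t₁ ht₁ s hs hsu
  have h2 := keyA t₂ ht₂ s hs hsu
  have h1' := mul_le_mul_of_nonneg_left h1 hθ0
  have h2' := mul_le_mul_of_nonneg_left h2 (by linarith : (0:ℝ) ≤ 1 - θ)
  rw [heq]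
  nlinarith [h1', h2']
end

section
/- For all u₁ > u₂ > 0 and every t ≥ 0, one has φ(t; u₁) ≤ φ(t; u₂). -/
/-- Tangent line inequality (Young): `t ^ p ≤ p * (t*u - u^q/q)`. -/
lemma key_tangent (p q : ℝ) (hp0 : 0 < p) (hp1 : p < 1) (hq0 : q < 0)
    (hpq : p * q = p + q) (u t : ℝ) (hu : 0 < u) (ht : 0 ≤ t) :
    t ^ p ≤ p * (t * u - u ^ q / q) := by
  have huq : (0:ℝ) < u ^ q := Real.rpow_pos_of_pos hu q
  have hqne : q ≠ 0 := ne_of_lt hq0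
  have h := Real.geom_mean_le_arith_mean2_weighted (le_of_lt hp0)
    (by linarith : (0:ℝ) ≤ 1 - p) (mul_nonneg ht hu.le) huq.le (by ring)
  have e1 : (t * u) ^ p * (u ^ q) ^ (1 - p) = t ^ p := by
    rw [Real.mul_rpow ht hu.le, ← Real.rpow_mul hu.le, mul_assoc,
      ← Real.rpow_add hu]
    have : p + q * (1 - p) = 0 := by nlinarith
    rw [this, Real.rpow_zero, mul_one]
  have e2 : p * (t * u) + (1 - p) * u ^ q = p * (t * u - u ^ q / q) := by
    field_simp
    nlinarith [huq]
  rw [e1, e2] at h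
  exact h

/-- Value of the tangent line at the touch point. -/
lemma key_touch (p q : ℝ) (hp0 : 0 < p) (hq0 : q < 0)
    (hpq : p * q = p + q) (u : ℝ) (hu : 0 < u) :
    p * (u ^ (q - 1) * u - u ^ q / q) = (u ^ (q - 1)) ^ p := by
  have hqne : q ≠ 0 := ne_of_lt hq0
  have e1 : u ^ (q - 1) * u = u ^ q := by
    rw [← Real.rpow_add_one hu.ne' (q - 1)]
    norm_num
  have e2 : (u ^ (q - 1)) ^ p = u ^ q := by
    rw [← Real.rpow_mul hu.le]
    congr 1
    nlinarith
  rw [e1, e2]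
  field_simp
  nlinarith [Real.rpow_pos_of_pos hu q]

theorem stmt_7 (p q : ℝ) (hp0 : 0 < p) (hp1 : p < 1) (hq : q = p / (p - 1))
    (u₁ u₂ : ℝ) (hu2 : 0 < u₂) (hu12 : u₂ < u₁) :
    ∀ t : ℝ, 0 ≤ t → phi p q u₁ t ≤ phi p q u₂ t := by
  have hp1' : p - 1 < 0 := by linarith
  have hq0 : q < 0 := by
    rw [hq]; exact div_neg_of_pos_of_neg hp0 hp1'
  have hne : p - 1 ≠ 0 := ne_of_lt hp1'
  have hpq : p * q = p + q := by
    rw [hq]; field_simp; ring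
  have hu1 : 0 < u₁ := lt_trans hu2 hu12
  have hth : u₁ ^ (q - 1) < u₂ ^ (q - 1) :=
    Real.rpow_lt_rpow_of_neg hu2 hu12 (by linarith)
  intro t ht
  unfold phi
  by_cases h2 : u₂ ^ (q - 1) < t
  · rw [if_pos (lt_trans hth h2), if_pos h2]
  · rw [if_neg h2]
    push_neg at h2
    by_cases h1 : u₁ ^ (q - 1) < t
    · rw [if_pos h1]
      exact key_tangent p q hp0 hp1 hq0 hpq u₂ t hu2 ht
    · rw [if_neg h1]
      push_neg at h1
      -- both on the linear part; compare via values at t₁ = u₁^(q-1) and slopes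
      set t₁ := u₁ ^ (q - 1) with ht₁
      have htouch : p * (t₁ * u₁ - u₁ ^ q / q) = t₁ ^ p :=
        key_touch p q hp0 hq0 hpq u₁ hu1
      have htan : t₁ ^ p ≤ p * (t₁ * u₂ - u₂ ^ q / q) :=
        key_tangent p q hp0 hp1 hq0 hpq u₂ t₁ hu2
          (Real.rpow_pos_of_pos hu1 _).le
      have hslope : 0 ≤ p * (u₁ - u₂) * (t₁ - t) := by
        apply mul_nonneg (mul_nonneg hp0.le (by linarith)) (by linarith)
      nlinarith [htouch, htan, hslope]
end

section
/- For every ε > 0 and every t ≥ 0, setting u_ε = ε^{p−1}, one has φ(t; u_ε) ≤ (t + ε)^p. -/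
theorem stmt_9 (p q : ℝ) (hp0 : 0 < p) (hp1 : p < 1) (hq : q = p / (p - 1))
    (ε : ℝ) (hε : 0 < ε) (t : ℝ) (ht : 0 ≤ t) :
    phi p q (ε ^ (p - 1)) t ≤ (t + ε) ^ p := by
  have hp1' : p - 1 ≠ 0 := by intro h; linarith [h]
  have hp1'' : p - 1 < 0 := by linarith
  have hu : (ε ^ (p - 1)) ^ (q - 1) = ε := by
    rw [← Real.rpow_mul hε.le]
    have : (p - 1) * (q - 1) = 1 := by
      rw [hq]; field_simp; ring
    rw [this, Real.rpow_one]
  have huq : (ε ^ (p - 1)) ^ q = ε ^ p := by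
    rw [← Real.rpow_mul hε.le]
    congr 1
    rw [hq]; field_simp
  unfold phi
  rw [hu, huq]
  split_ifs with h
  · exact Real.rpow_le_rpow ht (by linarith) hp0.le
  · -- t ≤ ε case
    push_neg at h
    set A := ε ^ (p - 1) with hA
    have hApos : 0 < A := Real.rpow_pos_of_pos hε _
    have hE : ε ^ p = ε * A := by
      have h1 := Real.rpow_add hε 1 (p - 1)
      rw [Real.rpow_one] at h1
      rw [hA, ← h1]; norm_num
    have ha : (0:ℝ) ≤ (ε - t) / ε := div_nonneg (by linarith) hε.le
    have hb : (0:ℝ) ≤ t / ε := div_nonneg ht hε.le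
    have hab : (ε - t) / ε + t / ε = 1 := by
      rw [← add_div]; field_simp; ring
    have hC := (Real.concaveOn_rpow hp0.le hp1.le).2
      (Set.mem_Ici.mpr hε.le) (Set.mem_Ici.mpr (by linarith : (0:ℝ) ≤ 2 * ε))
      ha hb hab
    simp only [smul_eq_mul] at hC
    have hcomb : (ε - t) / ε * ε + t / ε * (2 * ε) = t + ε := by
      field_simp; ring
    rw [hcomb] at hC
    have h2e : (2 * ε) ^ p = 2 ^ p * ε ^ p :=
      Real.mul_rpow (by norm_num) hε.le
    rw [h2e, hE] at hC
    have e1 : (ε - t) / ε * (ε * A) = (ε - t) * A := by field_simp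
    have e2 : t / ε * (2 ^ p * (ε * A)) = t * (2 ^ p * A) := by
      field_simp
    rw [e1, e2] at hC
    have hbern : (2:ℝ) ^ p ≤ 1 + p := by
      have := rpow_one_add_le_one_add_mul_self (s := 1) (by norm_num) hp0.le hp1.le
      norm_num at this
      linarith
    have hone : (1:ℝ) ≤ 2 ^ p := by
      have := Real.rpow_le_rpow_of_exponent_le (x := 2) (by norm_num) hp0.le
      simpa using this
    have hdiv : ε ^ p / q = ε * A * (p - 1) / p := by
      rw [hq, hE]; field_simp
    rw [hdiv]
    have hdcancel : p * (ε * A * (p - 1) / p) = ε * A * (p - 1) := by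
      field_simp
    have key : p * (t * A - ε * A * (p - 1) / p) ≤ (ε - t) * A + t * (2 ^ p * A) := by
      have hint1 : 0 ≤ (ε - t) * ((1 + p - 2 ^ p) * A) :=
        mul_nonneg (by linarith) (mul_nonneg (by linarith) hApos.le)
      have hint2 : 0 ≤ ε * ((2 ^ p - 1) * A) :=
        mul_nonneg hε.le (mul_nonneg (by linarith) hApos.le)
      nlinarith [hdcancel, hint1, hint2]
    linarith
end

section
/- For every n ≥ 1, every ε > 0, and every x ∈ ℝ^n, setting u_ε = ε^{p−1}, one has the sandwich inequality ∑_{i=1}^n |x_i|^p ≤ ∑_{i=1}^n φ(|x_i|; u_ε) ≤ ∑_{i=1}^n (|x_i| + ε)^p. -/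
lemma phi_aux (p q : ℝ) (hp0 : 0 < p) (hp1 : p < 1) (hq : q = p / (p - 1))
    (ε : ℝ) (hε : 0 < ε) (t : ℝ) (ht : 0 ≤ t) :
    t ^ p ≤ phi p q (ε ^ (p - 1)) t ∧ phi p q (ε ^ (p - 1)) t ≤ (t + ε) ^ p := by
  have hp1' : p - 1 < 0 := by linarith
  have hne : p - 1 ≠ 0 := hp1'.ne
  have hq1 : (ε ^ (p - 1)) ^ (q - 1) = ε := by
    rw [← Real.rpow_mul hε.le]
    have : (p - 1) * (q - 1) = 1 := by
      rw [hq]; field_simp; ring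
    rw [this, Real.rpow_one]
  have hqq : (ε ^ (p - 1)) ^ q = ε ^ p := by
    rw [← Real.rpow_mul hε.le]
    congr 1
    rw [hq, mul_comm]; exact div_mul_cancel₀ p hne
  have hqne : q ≠ 0 := by
    rw [hq]
    exact div_ne_zero hp0.ne' (ne_of_lt hp1')
  have hlin : p * (t * ε ^ (p - 1) - (ε ^ (p - 1)) ^ q / q) =
      p * (t * ε ^ (p - 1)) + (1 - p) * ε ^ p := by
    rw [hqq, hq]
    field_simp
    ring
  unfold phi
  rw [hq1]
  by_cases h : ε < t
  · rw [if_pos h]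
    refine ⟨le_refl _, Real.rpow_le_rpow ht (by linarith) hp0.le⟩
  · rw [if_neg h, hlin]
    push_neg at h
    constructor
    · -- weighted AM-GM : (t ε^{p-1})^p (ε^p)^{1-p} ≤ p (t ε^{p-1}) + (1-p) ε^p
      have hεp : (0:ℝ) ≤ ε ^ (p - 1) := (Real.rpow_pos_of_pos hε _).le
      have hεpp : (0:ℝ) ≤ ε ^ p := (Real.rpow_pos_of_pos hε _).le
      have amgm := Real.geom_mean_le_arith_mean2_weighted hp0.le (by linarith : (0:ℝ) ≤ 1 - p)
        (mul_nonneg ht hεp) hεpp (by ring)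
      have hLHS : (t * ε ^ (p - 1)) ^ p * (ε ^ p) ^ (1 - p) = t ^ p := by
        rw [Real.mul_rpow ht hεp, ← Real.rpow_mul hε.le, ← Real.rpow_mul hε.le,
          mul_assoc, ← Real.rpow_add hε]
        have : (p - 1) * p + p * (1 - p) = 0 := by ring
        rw [this, Real.rpow_zero, mul_one]
      rw [hLHS] at amgm
      exact amgm
    · have h1 : t * ε ^ (p - 1) ≤ ε ^ p := by
        calc t * ε ^ (p - 1) ≤ ε * ε ^ (p - 1) := by
              exact mul_le_mul_of_nonneg_right h (Real.rpow_pos_of_pos hε _).le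
          _ = ε ^ p := by
              nth_rewrite 1 [← Real.rpow_one ε]
              rw [← Real.rpow_add hε]; ring_nf
      have h2 : ε ^ p ≤ (t + ε) ^ p :=
        Real.rpow_le_rpow hε.le (by linarith) hp0.le
      nlinarith [mul_le_mul_of_nonneg_left h1 hp0.le]

theorem stmt_10 (p q : ℝ) (hp0 : 0 < p) (hp1 : p < 1) (hq : q = p / (p - 1))
    (n : ℕ) (hn : 1 ≤ n) (ε : ℝ) (hε : 0 < ε) (x : Fin n → ℝ) :
    (∑ i, |x i| ^ p) ≤ (∑ i, phi p q (ε ^ (p - 1)) |x i|) ∧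
    (∑ i, phi p q (ε ^ (p - 1)) |x i|) ≤ ∑ i, (|x i| + ε) ^ p := by
  constructor
  · exact Finset.sum_le_sum fun i _ =>
      (phi_aux p q hp0 hp1 hq ε hε _ (abs_nonneg _)).1
  · exact Finset.sum_le_sum fun i _ =>
      (phi_aux p q hp0 hp1 hq ε hε _ (abs_nonneg _)).2
end

section
/- Let n ≥ 1, y ∈ ℝ^n with y_i > 0 for all i, w ∈ ℝ^n with w_i > 0 for all i, and r > 0 with r < ∑_{i=1}^n w_i y_i. If z is an optimal solution of the weighted ℓ₁-ball projection problem, then z ≠ 0, i.e., z has at least one nonzero component. -/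
theorem stmt_11 (n : ℕ) (hn : 1 ≤ n)
    (y : EuclideanSpace ℝ (Fin n)) (hy : ∀ i, 0 < y i)
    (w : Fin n → ℝ) (hw : ∀ i, 0 < w i)
    (r : ℝ) (hr : 0 < r) (hrlt : r < ∑ i, w i * y i)
    (z : EuclideanSpace ℝ (Fin n))
    (hzfeas : (∀ i, 0 ≤ z i) ∧ ∑ i, w i * z i ≤ r)
    (hzopt : ∀ x : EuclideanSpace ℝ (Fin n),
      (∀ i, 0 ≤ x i) → (∑ i, w i * x i) ≤ r → ‖z - y‖ ≤ ‖x - y‖) :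
    z ≠ 0 := by
  intro hz
  subst hz
  have hS : (0:ℝ) < ∑ i, w i * y i := lt_trans hr hrlt
  set S := ∑ i, w i * y i with hSdef
  set t : ℝ := r / S with htdef
  have ht0 : 0 < t := div_pos hr hS
  have ht1 : t < 1 := (div_lt_one hS).mpr hrlt
  have hxnn : ∀ i, 0 ≤ (t • y : EuclideanSpace ℝ (Fin n)) i := by
    intro i
    have : (t • y : EuclideanSpace ℝ (Fin n)) i = t * y i := rfl
    rw [this]
    exact le_of_lt (mul_pos ht0 (hy i))
  have hxsum : (∑ i, w i * (t • y : EuclideanSpace ℝ (Fin n)) i) ≤ r := by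
    have : (∑ i, w i * (t • y : EuclideanSpace ℝ (Fin n)) i) = t * S := by
      rw [hSdef, Finset.mul_sum]
      apply Finset.sum_congr rfl
      intro i _
      show w i * (t * y i) = t * (w i * y i)
      ring
    rw [this, htdef, div_mul_cancel₀ _ (ne_of_gt hS)]
  have hle := hzopt (t • y) hxnn hxsum
  have hy0 : y ≠ 0 := by
    intro h
    have := hy ⟨0, hn⟩
    rw [h] at this
    exact lt_irrefl 0 this
  have hnorm : ‖(t • y : EuclideanSpace ℝ (Fin n)) - y‖ = (1 - t) * ‖y‖ := by
    have : (t • y : EuclideanSpace ℝ (Fin n)) - y = (t - 1) • y := by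
      rw [sub_smul, one_smul]
    rw [this, norm_smul, Real.norm_eq_abs, abs_of_neg (by linarith), neg_sub]
  rw [zero_sub, norm_neg, hnorm] at hle
  have hyn : 0 < ‖y‖ := norm_pos_iff.mpr hy0
  nlinarith
end

section
/- Let n ≥ 1, y ∈ ℝ^n with y_i > 0 for all i, w ∈ ℝ^n with w_i > 0 for all i, and r > 0 with r < ∑_{i=1}^n w_i y_i. If z is an optimal solution of the weighted ℓ₁-ball projection problem, then the constraint is active at z: ∑_{i=1}^n w_i z_i = r. -/
theorem stmt_12 (n : ℕ) (hn : 1 ≤ n)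
    (y : EuclideanSpace ℝ (Fin n)) (hy : ∀ i, 0 < y i)
    (w : Fin n → ℝ) (hw : ∀ i, 0 < w i)
    (r : ℝ) (hr : 0 < r) (hrlt : r < ∑ i, w i * y i)
    (z : EuclideanSpace ℝ (Fin n))
    (hzfeas : (∀ i, 0 ≤ z i) ∧ ∑ i, w i * z i ≤ r)
    (hzopt : ∀ x : EuclideanSpace ℝ (Fin n),
      (∀ i, 0 ≤ x i) → (∑ i, w i * x i) ≤ r → ‖z - y‖ ≤ ‖x - y‖) :
    ∑ i, w i * z i = r := by
  obtain ⟨hz0, hzr⟩ := hzfeas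
  by_contra hne
  have hs : ∑ i, w i * z i < r := lt_of_le_of_ne hzr hne
  set s := ∑ i, w i * z i with hsdef
  set S := ∑ i, w i * y i with hSdef
  have hsS : s < S := hs.trans hrlt
  set t : ℝ := (r - s) / (S - s) with htdef
  have ht0 : 0 < t := div_pos (by linarith) (by linarith)
  have ht1 : t < 1 := (div_lt_one (by linarith)).2 (by linarith)
  set x : EuclideanSpace ℝ (Fin n) := WithLp.toLp 2 (fun i => (1 - t) * z i + t * y i) with hxdef
  have hx0 : ∀ i, 0 ≤ x i := fun i =>
    add_nonneg (mul_nonneg (by linarith) (hz0 i)) (mul_nonneg ht0.le (hy i).le)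
  have hsum : ∑ i, w i * x i = (1 - t) * s + t * S := by
    rw [hsdef, hSdef, Finset.mul_sum, Finset.mul_sum, ← Finset.sum_add_distrib]
    refine Finset.sum_congr rfl fun i _ => ?_
    show w i * ((1 - t) * z i + t * y i) = _
    ring
  have hkey : t * (S - s) = r - s := div_mul_cancel₀ _ (by linarith)
  have hxr : ∑ i, w i * x i ≤ r := by
    rw [hsum]; nlinarith [hkey]
  have hle := hzopt x hx0 hxr
  have hzy : z - y ≠ 0 := by
    intro h
    have : z = y := by rwa [sub_eq_zero] at h
    rw [hsdef, this] at hsS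
    exact lt_irrefl _ hsS
  have hnorm : ‖x - y‖ = (1 - t) * ‖z - y‖ := by
    have hx : x - y = (1 - t) • (z - y) := by
      ext i
      show x i - y i = (1 - t) * (z i - y i)
      show (1 - t) * z i + t * y i - y i = _
      ring
    rw [hx, norm_smul, Real.norm_eq_abs, abs_of_pos (by linarith)]
  have hpos : 0 < ‖z - y‖ := norm_pos_iff.mpr hzy
  rw [hnorm] at hle
  nlinarith
end

section
/- Let n ≥ 1, y ∈ ℝ^n with y_i > 0 for all i, w ∈ ℝ^n with w_i > 0 for all i, and r > 0 with r < ∑_{i=1}^n w_i y_i. If z is an optimal solution of the weighted ℓ₁-ball projection problem, then 0 ≤ z_i ≤ y_i for every index i. -/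
theorem stmt_13 (n : ℕ) (hn : 1 ≤ n)
    (y : EuclideanSpace ℝ (Fin n)) (hy : ∀ i, 0 < y i)
    (w : Fin n → ℝ) (hw : ∀ i, 0 < w i)
    (r : ℝ) (hr : 0 < r) (hrlt : r < ∑ i, w i * y i)
    (z : EuclideanSpace ℝ (Fin n))
    (hzfeas : (∀ i, 0 ≤ z i) ∧ ∑ i, w i * z i ≤ r)
    (hzopt : ∀ x : EuclideanSpace ℝ (Fin n),
      (∀ i, 0 ≤ x i) → (∑ i, w i * x i) ≤ r → ‖z - y‖ ≤ ‖x - y‖) :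
    ∀ i, 0 ≤ z i ∧ z i ≤ y i := by
  intro i
  refine ⟨hzfeas.1 i, ?_⟩
  by_contra hlt
  push_neg at hlt
  set x : EuclideanSpace ℝ (Fin n) := WithLp.toLp 2 (Function.update z i (y i)) with hx
  have hxj : ∀ j, x j = if j = i then y i else z j := by
    intro j
    by_cases h : j = i
    · subst h; simp [hx]
    · simp [hx, Function.update_of_ne h, if_neg h]
  have hx0 : ∀ j, 0 ≤ x j := by
    intro j; rw [hxj]
    split
    · exact (hy i).le
    · exact hzfeas.1 j
  have hsum : ∑ j, w j * x j ≤ r := by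
    refine le_trans (Finset.sum_le_sum ?_) hzfeas.2
    intro j _
    rw [hxj]
    split
    · next h =>
        subst h
        exact mul_le_mul_of_nonneg_left hlt.le (hw j).le
    · exact le_refl _
  have hle := hzopt x hx0 hsum
  have h1 : ‖x - y‖ ^ 2 < ‖z - y‖ ^ 2 := by
    rw [EuclideanSpace.norm_eq, EuclideanSpace.norm_eq,
      Real.sq_sqrt (by positivity), Real.sq_sqrt (by positivity)]
    apply Finset.sum_lt_sum
    · intro j _
      simp only [PiLp.sub_apply, Real.norm_eq_abs, sq_abs]
      rw [hxj]
      split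
      · next h =>
          subst h
          simp
          positivity
      · exact le_refl _
    · refine ⟨i, Finset.mem_univ i, ?_⟩
      simp only [PiLp.sub_apply, Real.norm_eq_abs, sq_abs]
      rw [hxj]
      simp
      nlinarith
  nlinarith [norm_nonneg (x - y), norm_nonneg (z - y)]
end

section
/- Let n ≥ 1, γ > 0, and 0 < ε' ≤ ε. Let x, x' ∈ ℝ^n with x_i ≥ 0 and x'_i ≥ 0 for all i. Suppose ∑_{i=1}^n φ(x_i; ε^{p−1}) ≤ γ and that x' is feasible for the linearized subproblem, i.e., ∑_{i=1}^n w_i(x, ε)·x'_i ≤ γ − ∑_{i=1}^n φ(x_i; ε^{p−1}) + ∑_{i=1}^n w_i(x, ε)·x_i. Then ∑_{i=1}^n φ(x'_i; (ε')^{p−1}) ≤ γ. -/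
/-- The weight vector `w(x, ε)`: `w_i = p * x_i ^ (p-1)` if `x_i > ε`, and
`w_i = p * ε ^ (p-1)` if `x_i ≤ ε`. -/
noncomputable def wgt (p : ℝ) {n : ℕ} (x : Fin n → ℝ) (ε : ℝ) (i : Fin n) : ℝ :=
  if ε < x i then p * x i ^ (p - 1) else p * ε ^ (p - 1)

/-- A convenient reformulation of `phi`: tangent line of `t ^ p` at `ε`. -/
noncomputable def psi (p ε t : ℝ) : ℝ :=
  if ε < t then t ^ p else ε ^ p + p * ε ^ (p - 1) * (t - ε)

/-- The tangent line of `t ↦ t ^ p` at `s` lies above the curve (concavity). -/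
lemma tangent_ge {p : ℝ} (hp0 : 0 < p) (hp1 : p < 1) {s t : ℝ} (hs : 0 < s) (ht : 0 ≤ t) :
    t ^ p ≤ s ^ p + p * s ^ (p - 1) * (t - s) := by
  have hb : (1 + (t / s - 1)) ^ p ≤ 1 + p * (t / s - 1) :=
    rpow_one_add_le_one_add_mul_self (by
      have := div_nonneg ht hs.le; linarith) hp0.le hp1.le
  have h1 : 1 + (t / s - 1) = t / s := by ring
  rw [h1, Real.div_rpow ht hs.le] at hb
  have hsp : 0 < s ^ p := Real.rpow_pos_of_pos hs p
  have hmul := mul_le_mul_of_nonneg_right hb hsp.le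
  rw [div_mul_cancel₀ _ hsp.ne'] at hmul
  have hkey : s ^ (p - 1) * s = s ^ p := by
    rw [← Real.rpow_add_one hs.ne' (p - 1)]; norm_num
  have hkey2 : s ^ p * (t / s) = s ^ (p - 1) * t := by
    rw [← hkey]; field_simp
  calc t ^ p ≤ (1 + p * (t / s - 1)) * s ^ p := hmul
    _ = s ^ p + p * (s ^ p * (t / s)) - p * s ^ p := by ring
    _ = s ^ p + p * s ^ (p - 1) * (t - s) := by
        rw [hkey2, ← hkey]; ring

/-- Comparison of tangent lines: for `t ≤ a ≤ b`, the tangent at `a` lies below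
the tangent at `b`. -/
lemma tangent_mono {p : ℝ} (hp0 : 0 < p) (hp1 : p < 1) {a b t : ℝ} (ha : 0 < a)
    (hab : a ≤ b) (hta : t ≤ a) :
    a ^ p + p * a ^ (p - 1) * (t - a) ≤ b ^ p + p * b ^ (p - 1) * (t - b) := by
  have hb : 0 < b := lt_of_lt_of_le ha hab
  have h1 : a ^ p ≤ b ^ p + p * b ^ (p - 1) * (a - b) := tangent_ge hp0 hp1 hb ha.le
  have h2 : b ^ (p - 1) ≤ a ^ (p - 1) :=
    Real.rpow_le_rpow_of_nonpos ha hab (by linarith)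
  have h3 : p * a ^ (p - 1) * (t - a) ≤ p * b ^ (p - 1) * (t - a) := by
    have := mul_le_mul_of_nonneg_left h2 hp0.le
    nlinarith
  nlinarith

/-- `psi` lies below the tangent line at `ε`. -/
lemma psi_le_tangent {p : ℝ} (hp0 : 0 < p) (hp1 : p < 1) {ε t : ℝ} (hε : 0 < ε) (ht : 0 ≤ t) :
    psi p ε t ≤ ε ^ p + p * ε ^ (p - 1) * (t - ε) := by
  unfold psi
  split_ifs with h
  · exact tangent_ge hp0 hp1 hε ht
  · exact le_refl _

/-- `psi` is monotone in the smoothing parameter. -/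
lemma psi_mono {p : ℝ} (hp0 : 0 < p) (hp1 : p < 1) {ε ε' t : ℝ} (hε' : 0 < ε')
    (hεε : ε' ≤ ε) (ht : 0 ≤ t) : psi p ε' t ≤ psi p ε t := by
  have hε : 0 < ε := lt_of_lt_of_le hε' hεε
  unfold psi
  split_ifs with h1 h2 h2
  · exact le_refl _
  · exact tangent_ge hp0 hp1 hε ht
  · exact absurd h2 (not_lt.mpr (le_trans (not_lt.mp h1) hεε))
  · exact tangent_mono hp0 hp1 hε' hεε (not_lt.mp h1)

/-- Supergradient inequality for `psi` with the weight `w`. -/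
lemma psi_supergrad {p : ℝ} (hp0 : 0 < p) (hp1 : p < 1) {ε s t : ℝ} (hε : 0 < ε)
    (hs : 0 ≤ s) (ht : 0 ≤ t) :
    psi p ε t ≤ psi p ε s +
      (if ε < s then p * s ^ (p - 1) else p * ε ^ (p - 1)) * (t - s) := by
  by_cases hcs : ε < s
  · rw [if_pos hcs]
    have hpsis : psi p ε s = s ^ p := by unfold psi; rw [if_pos hcs]
    rw [hpsis]
    by_cases hct : ε < t
    · have : psi p ε t = t ^ p := by unfold psi; rw [if_pos hct]
      rw [this]
      exact tangent_ge hp0 hp1 (hε.trans hcs) ht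
    · have : psi p ε t = ε ^ p + p * ε ^ (p - 1) * (t - ε) := by
        unfold psi; rw [if_neg hct]
      rw [this]
      have := tangent_mono hp0 hp1 hε hcs.le (not_lt.mp hct)
      linarith
  · rw [if_neg hcs]
    have hpsis : psi p ε s = ε ^ p + p * ε ^ (p - 1) * (s - ε) := by
      unfold psi; rw [if_neg hcs]
    rw [hpsis]
    have h := psi_le_tangent hp0 hp1 hε ht
    linarith

/-- Rewriting `phi` with parameter `ε ^ (p-1)` as `psi`. -/
lemma phi_eq_psi {p q : ℝ} (hp0 : 0 < p) (hp1 : p < 1) (hq : q = p / (p - 1))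
    {ε : ℝ} (hε : 0 < ε) (t : ℝ) : phi p q (ε ^ (p - 1)) t = psi p ε t := by
  have hp1' : p - 1 < 0 := by linarith
  have hp1n : p - 1 ≠ 0 := ne_of_lt hp1'
  have hq1 : (p - 1) * (q - 1) = 1 := by rw [hq]; field_simp; ring
  have hτ : (ε ^ (p - 1)) ^ (q - 1) = ε := by
    rw [← Real.rpow_mul hε.le, hq1, Real.rpow_one]
  have huq : (ε ^ (p - 1)) ^ q = ε ^ p := by
    rw [← Real.rpow_mul hε.le]
    congr 1
    rw [hq]; field_simp
  have hqne : q ≠ 0 := by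
    rw [hq]
    exact div_ne_zero hp0.ne' hp1n
  have hpq : p / q = p - 1 := by
    rw [hq]; field_simp
  have hεp : ε ^ (p - 1) * ε = ε ^ p := by
    rw [← Real.rpow_add_one hε.ne' (p - 1)]; norm_num
  unfold phi psi
  rw [hτ, huq]
  split_ifs with h
  · rfl
  · have : p * (t * ε ^ (p - 1) - ε ^ p / q) = p * t * ε ^ (p - 1) - (p / q) * ε ^ p := by
      field_simp
    rw [this, hpq]
    nlinarith [hεp]

theorem stmt_14 (p q : ℝ) (hp0 : 0 < p) (hp1 : p < 1) (hq : q = p / (p - 1))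
    (n : ℕ) (hn : 1 ≤ n) (γ : ℝ) (hγ : 0 < γ)
    (ε ε' : ℝ) (hε' : 0 < ε') (hεε : ε' ≤ ε)
    (x x' : Fin n → ℝ) (hx : ∀ i, 0 ≤ x i) (hx' : ∀ i, 0 ≤ x' i)
    (hfeas : ∑ i, phi p q (ε ^ (p - 1)) (x i) ≤ γ)
    (hsub : ∑ i, wgt p x ε i * x' i ≤
      γ - (∑ i, phi p q (ε ^ (p - 1)) (x i)) + ∑ i, wgt p x ε i * x i) :
    ∑ i, phi p q (ε' ^ (p - 1)) (x' i) ≤ γ := by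
  have hε : 0 < ε := lt_of_lt_of_le hε' hεε
  have key : ∀ i, phi p q (ε' ^ (p - 1)) (x' i) ≤
      phi p q (ε ^ (p - 1)) (x i) + wgt p x ε i * x' i - wgt p x ε i * x i := by
    intro i
    rw [phi_eq_psi hp0 hp1 hq hε', phi_eq_psi hp0 hp1 hq hε]
    have h1 : psi p ε' (x' i) ≤ psi p ε (x' i) :=
      psi_mono hp0 hp1 hε' hεε (hx' i)
    have h2 := psi_supergrad hp0 hp1 hε (hx i) (hx' i)
    have hw : wgt p x ε i = if ε < x i then p * x i ^ (p - 1) else p * ε ^ (p - 1) := rfl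
    rw [hw]
    have : (if ε < x i then p * x i ^ (p - 1) else p * ε ^ (p - 1)) * (x' i - x i)
        = (if ε < x i then p * x i ^ (p - 1) else p * ε ^ (p - 1)) * x' i
          - (if ε < x i then p * x i ^ (p - 1) else p * ε ^ (p - 1)) * x i := by ring
    rw [this] at h2
    linarith
  have hsum : ∑ i, phi p q (ε' ^ (p - 1)) (x' i) ≤
      ∑ i, (phi p q (ε ^ (p - 1)) (x i) + wgt p x ε i * x' i - wgt p x ε i * x i) :=
    Finset.sum_le_sum fun i _ => key i
  rw [Finset.sum_sub_distrib, Finset.sum_add_distrib] at hsum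
  linarith
end

section
/- Let n ≥ 1, 0 < p < 1, ε > 0, λ ≥ 0, y ∈ ℝ^n, and x, x' ∈ ℝ^n with x_i ≥ 0 and 0 ≤ x'_i ≤ ‖y‖_∞ for all i. Let I = {i : x'_i > 0}, I1 = {i ∈ I : x_i ≤ ε}, and I2 = {i ∈ I : x_i > ε}. Assume the stationarity conditions: y_i − x'_i = λ·p·ε^{p−1} for all i ∈ I1, and y_i − x'_i = λ·p·x_i^{p−1} for all i ∈ I2. Then there exists x̃ ∈ ℝ^n such that x̃_i lies between x'_i and ε for all i ∈ I1, x̃_i lies between x'_i and x_i for all i ∈ I2, and ∑_{i=1}^n |(y_i − x'_i)·x'_i − λ·p·(x'_i)^p| ≤ λ·p·(1−p)·ε·(∑_{i∈I1} x̃_i^{p−2})·‖y‖_∞ + λ·p·(1−p)·(∑_{i∈I} x̃_i^{2(p−2)})^{1/2}·(∑_{i∈I} (x_i − x'_i)²)^{1/2}·‖y‖_∞. -/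
lemma rpow_mvt_lt (p a b : ℝ) (ha : 0 < a) (hab : a < b) :
    ∃ c, a ≤ c ∧ c ≤ b ∧ 0 < c ∧
      b ^ (p - 1) - a ^ (p - 1) = (p - 1) * c ^ (p - 2) * (b - a) := by
  have hcont : ContinuousOn (fun t : ℝ => t ^ (p - 1)) (Set.Icc a b) := by
    apply ContinuousOn.rpow_const continuousOn_id
    intro t ht
    exact Or.inl (ne_of_gt (lt_of_lt_of_le ha ht.1))
  have hderiv : ∀ t ∈ Set.Ioo a b, HasDerivAt (fun t : ℝ => t ^ (p - 1))
      ((p - 1) * t ^ (p - 1 - 1)) t := fun t ht =>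
    Real.hasDerivAt_rpow_const (Or.inl (ne_of_gt (lt_trans ha ht.1)))
  obtain ⟨c, hc, hceq⟩ := exists_hasDerivAt_eq_slope _ _ hab hcont hderiv
  have hc0 : 0 < c := lt_trans ha hc.1
  refine ⟨c, hc.1.le, hc.2.le, hc0, ?_⟩
  have hba : b - a ≠ 0 := sub_ne_zero.mpr (ne_of_gt hab)
  rw [show p - 2 = p - 1 - 1 by ring]
  field_simp at hceq
  linarith [hceq]

lemma rpow_mvt (p a b : ℝ) (ha : 0 < a) (hb : 0 < b) :
    ∃ c, min a b ≤ c ∧ c ≤ max a b ∧ 0 < c ∧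
      b ^ (p - 1) - a ^ (p - 1) = (p - 1) * c ^ (p - 2) * (b - a) := by
  rcases lt_trichotomy a b with h | h | h
  · obtain ⟨c, h1, h2, h3, h4⟩ := rpow_mvt_lt p a b ha h
    exact ⟨c, (min_le_left a b).trans h1, h2.trans (le_max_right a b), h3, h4⟩
  · subst h
    exact ⟨a, (min_self a).le, (max_self a).ge, ha, by ring⟩
  · obtain ⟨c, h1, h2, h3, h4⟩ := rpow_mvt_lt p b a hb h
    exact ⟨c, (min_le_right a b).trans h1, h2.trans (le_max_left a b), h3, by linear_combination -h4⟩

open Finset in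
theorem stmt_18 (n : ℕ) (hn : 1 ≤ n) (p : ℝ) (hp0 : 0 < p) (hp1 : p < 1)
    (ε lam : ℝ) (hε : 0 < ε) (hlam : 0 ≤ lam)
    (y x x' : Fin n → ℝ) (hx : ∀ i, 0 ≤ x i)
    (hx' : ∀ i, 0 ≤ x' i ∧ x' i ≤ ‖y‖)
    -- index sets
    (I I1 I2 : Finset (Fin n))
    (hI : I = univ.filter fun i => 0 < x' i)
    (hI1 : I1 = I.filter fun i => x i ≤ ε)
    (hI2 : I2 = I.filter fun i => ε < x i)
    -- stationarity conditions
    (hstat1 : ∀ i ∈ I1, y i - x' i = lam * p * ε ^ (p - 1))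
    (hstat2 : ∀ i ∈ I2, y i - x' i = lam * p * x i ^ (p - 1)) :
    ∃ xt : Fin n → ℝ,
      (∀ i ∈ I1, min (x' i) ε ≤ xt i ∧ xt i ≤ max (x' i) ε) ∧
      (∀ i ∈ I2, min (x' i) (x i) ≤ xt i ∧ xt i ≤ max (x' i) (x i)) ∧
      (∑ i, |(y i - x' i) * x' i - lam * p * x' i ^ p|) ≤
        lam * p * (1 - p) * ε * (∑ i ∈ I1, xt i ^ (p - 2)) * ‖y‖ +
        lam * p * (1 - p) * Real.sqrt (∑ i ∈ I, xt i ^ (2 * (p - 2))) *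
          Real.sqrt (∑ i ∈ I, (x i - x' i) ^ 2) * ‖y‖ := by
  classical
  -- basic membership facts
  have hImem : ∀ i ∈ I, 0 < x' i := by
    intro i hi; rw [hI] at hi; exact (mem_filter.mp hi).2
  have hI1mem : ∀ i ∈ I1, i ∈ I ∧ x i ≤ ε := by
    intro i hi; rw [hI1] at hi; exact mem_filter.mp hi
  have hI2mem : ∀ i ∈ I2, i ∈ I ∧ ε < x i := by
    intro i hi; rw [hI2] at hi; exact mem_filter.mp hi
  have hI1I2 : Disjoint I1 I2 := by
    rw [Finset.disjoint_left]
    intro i h1 h2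
    exact absurd (hI2mem i h2).2 (not_lt.mpr (hI1mem i h1).2)
  -- choose xt via MVT
  have key : ∀ i : Fin n, ∃ c : ℝ,
      (i ∈ I1 → (min (x' i) ε ≤ c ∧ c ≤ max (x' i) ε ∧ 0 < c ∧
        ε ^ (p - 1) - x' i ^ (p - 1) = (p - 1) * c ^ (p - 2) * (ε - x' i))) ∧
      (i ∈ I2 → (min (x' i) (x i) ≤ c ∧ c ≤ max (x' i) (x i) ∧ 0 < c ∧
        x i ^ (p - 1) - x' i ^ (p - 1) = (p - 1) * c ^ (p - 2) * (x i - x' i))) := by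
    intro i
    by_cases h1 : i ∈ I1
    · have hx'pos := hImem i (hI1mem i h1).1
      obtain ⟨c, hc1, hc2, hc3, hc4⟩ := rpow_mvt p (x' i) ε hx'pos hε
      refine ⟨c, fun _ => ⟨hc1, hc2, hc3, hc4⟩, fun h2 => absurd ((hI2mem i h2).2) ?_⟩
      exact not_lt.mpr (hI1mem i h1).2
    · by_cases h2 : i ∈ I2
      · have hx'pos := hImem i (hI2mem i h2).1
        have hxpos : 0 < x i := lt_trans hε (hI2mem i h2).2
        obtain ⟨c, hc1, hc2, hc3, hc4⟩ := rpow_mvt p (x' i) (x i) hx'pos hxpos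
        exact ⟨c, fun h => absurd h h1, fun _ => ⟨hc1, hc2, hc3, hc4⟩⟩
      · exact ⟨1, fun h => absurd h h1, fun h => absurd h h2⟩
  choose xt hxt using key
  refine ⟨xt, fun i hi => ⟨((hxt i).1 hi).1, ((hxt i).1 hi).2.1⟩,
    fun i hi => ⟨((hxt i).2 hi).1, ((hxt i).2 hi).2.1⟩, ?_⟩
  set N := ‖y‖ with hN
  have hN0 : 0 ≤ N := norm_nonneg y
  set t : Fin n → ℝ := fun i => |(y i - x' i) * x' i - lam * p * x' i ^ p| with ht
  -- xt positive on I
  have hxtposI : ∀ i ∈ I, 0 < xt i := by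
    intro i hi
    by_cases h1 : i ∈ I1
    · exact ((hxt i).1 h1).2.2.1
    · have h2 : i ∈ I2 := by
        rw [hI2, mem_filter]
        rw [hI1, mem_filter] at h1
        push_neg at h1
        exact ⟨hi, h1 hi⟩
      exact ((hxt i).2 h2).2.2.1
  -- step A : sum over univ = sum over I
  have hA : (∑ i, t i) = ∑ i ∈ I, t i := by
    refine (Finset.sum_subset (Finset.subset_univ I) ?_).symm
    intro i _ hi
    have hx0 : x' i = 0 := by
      rw [hI, mem_filter] at hi
      push_neg at hi
      exact le_antisymm (hi (mem_univ i)) (hx' i).1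
    simp [ht, hx0, Real.zero_rpow (ne_of_gt hp0)]
  -- step B : split sum over I
  have hB : ∀ f : Fin n → ℝ, (∑ i ∈ I, f i) = ∑ i ∈ I1, f i + ∑ i ∈ I2, f i := by
    intro f
    rw [hI1, hI2, ← Finset.sum_filter_add_sum_filter_not I (fun i => x i ≤ ε)]
    congr 1
    apply Finset.sum_congr _ (fun _ _ => rfl)
    apply Finset.filter_congr
    intro i _
    simp [not_le]
  -- per-term bounds
  set g : Fin n → ℝ := fun i => xt i ^ (p - 2) with hg
  set d : Fin n → ℝ := fun i => |x i - x' i| with hd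
  have hxp : ∀ i ∈ I, x' i ^ p = x' i * x' i ^ (p - 1) := by
    intro i hi
    have h := Real.rpow_add (hImem i hi) 1 (p - 1)
    rw [Real.rpow_one] at h
    rw [show (1:ℝ) + (p - 1) = p by ring] at h
    exact h
  have hbound1 : ∀ i ∈ I1, t i ≤
      lam * p * (1 - p) * ε * N * xt i ^ (p - 2) +
      lam * p * (1 - p) * N * (xt i ^ (p - 2) * |x i - x' i|) := by
    intro i hi1
    have hiI := (hI1mem i hi1).1
    have hxle := (hI1mem i hi1).2
    have hx'pos := hImem i hiI
    obtain ⟨-, -, hcpos, heq⟩ := (hxt i).1 hi1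
    have hgn : 0 ≤ xt i ^ (p - 2) := Real.rpow_nonneg hcpos.le _
    have hKnn : 0 ≤ lam * p * (1 - p) * (x' i * xt i ^ (p - 2)) :=
      mul_nonneg (mul_nonneg (mul_nonneg hlam hp0.le) (by linarith))
        (mul_nonneg hx'pos.le hgn)
    have hterm : (y i - x' i) * x' i - lam * p * x' i ^ p =
        (lam * p * (1 - p) * (x' i * xt i ^ (p - 2))) * (x' i - ε) := by
      rw [hstat1 i hi1, hxp i hiI]
      linear_combination (lam * p * x' i) * heq
    have habs : t i = (lam * p * (1 - p) * (x' i * xt i ^ (p - 2))) * |x' i - ε| := by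
      simp only [ht]
      rw [hterm, abs_mul, abs_of_nonneg hKnn]
    have htri : |x' i - ε| ≤ (ε - x i) + |x i - x' i| := by
      rw [abs_sub_comm]
      calc |ε - x' i| = |(ε - x i) + (x i - x' i)| := by ring_nf
        _ ≤ |ε - x i| + |x i - x' i| := abs_add_le _ _
        _ = (ε - x i) + |x i - x' i| := by rw [abs_of_nonneg (by linarith)]
    have hCnn : 0 ≤ lam * p * (1 - p) * xt i ^ (p - 2) :=
      mul_nonneg (mul_nonneg (mul_nonneg hlam hp0.le) (by linarith)) hgn
    have hb1 : x' i * (ε - x i) ≤ N * ε :=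
      mul_le_mul (hx' i).2 (by linarith [hx i]) (by linarith) hN0
    have hb2 : x' i * |x i - x' i| ≤ N * |x i - x' i| :=
      mul_le_mul_of_nonneg_right (hx' i).2 (abs_nonneg _)
    calc t i = (lam * p * (1 - p) * (x' i * xt i ^ (p - 2))) * |x' i - ε| := habs
      _ ≤ (lam * p * (1 - p) * (x' i * xt i ^ (p - 2))) * ((ε - x i) + |x i - x' i|) :=
          mul_le_mul_of_nonneg_left htri hKnn
      _ = lam * p * (1 - p) * xt i ^ (p - 2) * (x' i * (ε - x i)) +
          lam * p * (1 - p) * xt i ^ (p - 2) * (x' i * |x i - x' i|) := by ring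
      _ ≤ lam * p * (1 - p) * xt i ^ (p - 2) * (N * ε) +
          lam * p * (1 - p) * xt i ^ (p - 2) * (N * |x i - x' i|) :=
          add_le_add (mul_le_mul_of_nonneg_left hb1 hCnn)
            (mul_le_mul_of_nonneg_left hb2 hCnn)
      _ = _ := by ring
  have hbound2 : ∀ i ∈ I2, t i ≤
      lam * p * (1 - p) * N * (xt i ^ (p - 2) * |x i - x' i|) := by
    intro i hi2
    have hiI := (hI2mem i hi2).1
    have hx'pos := hImem i hiI
    obtain ⟨-, -, hcpos, heq⟩ := (hxt i).2 hi2
    have hgn : 0 ≤ xt i ^ (p - 2) := Real.rpow_nonneg hcpos.le _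
    have hKnn : 0 ≤ lam * p * (1 - p) * (x' i * xt i ^ (p - 2)) :=
      mul_nonneg (mul_nonneg (mul_nonneg hlam hp0.le) (by linarith))
        (mul_nonneg hx'pos.le hgn)
    have hterm : (y i - x' i) * x' i - lam * p * x' i ^ p =
        (lam * p * (1 - p) * (x' i * xt i ^ (p - 2))) * (x' i - x i) := by
      rw [hstat2 i hi2, hxp i hiI]
      linear_combination (lam * p * x' i) * heq
    have habs : t i = (lam * p * (1 - p) * (x' i * xt i ^ (p - 2))) * |x i - x' i| := by
      simp only [ht]
      rw [hterm, abs_mul, abs_of_nonneg hKnn, abs_sub_comm]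
    rw [habs]
    calc (lam * p * (1 - p) * (x' i * xt i ^ (p - 2))) * |x i - x' i|
        = lam * p * (1 - p) * (xt i ^ (p - 2) * |x i - x' i|) * x' i := by ring
      _ ≤ lam * p * (1 - p) * (xt i ^ (p - 2) * |x i - x' i|) * N := by
          apply mul_le_mul_of_nonneg_left (hx' i).2
          exact mul_nonneg (mul_nonneg (mul_nonneg hlam hp0.le) (by linarith))
            (mul_nonneg hgn (abs_nonneg _))
      _ = _ := by ring
  have hCS : ∑ i ∈ I, xt i ^ (p - 2) * |x i - x' i| ≤
      Real.sqrt (∑ i ∈ I, xt i ^ (2 * (p - 2))) *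
        Real.sqrt (∑ i ∈ I, (x i - x' i) ^ 2) := by
    have e1 : ∑ i ∈ I, (xt i ^ (p - 2)) ^ 2 = ∑ i ∈ I, xt i ^ (2 * (p - 2)) :=
      Finset.sum_congr rfl fun i hi => by
        rw [show (2:ℝ) * (p - 2) = (p - 2) * 2 by ring,
          Real.rpow_mul (hxtposI i hi).le,
          show ((2:ℝ)) = ((2:ℕ):ℝ) by norm_num, Real.rpow_natCast]
    have e2 : ∑ i ∈ I, |x i - x' i| ^ 2 = ∑ i ∈ I, (x i - x' i) ^ 2 :=
      Finset.sum_congr rfl fun i _ => sq_abs _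
    calc ∑ i ∈ I, xt i ^ (p - 2) * |x i - x' i|
        ≤ Real.sqrt (∑ i ∈ I, (xt i ^ (p - 2)) ^ 2) *
          Real.sqrt (∑ i ∈ I, |x i - x' i| ^ 2) := by
          simpa using Real.sum_mul_le_sqrt_mul_sqrt I
            (fun i => xt i ^ (p - 2)) (fun i => |x i - x' i|)
      _ = _ := by rw [e1, e2]
  have hcoef : 0 ≤ lam * p * (1 - p) * N :=
    mul_nonneg (mul_nonneg (mul_nonneg hlam hp0.le) (by linarith)) hN0
  calc (∑ i, t i) = ∑ i ∈ I1, t i + ∑ i ∈ I2, t i := by rw [hA, hB]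
    _ ≤ (∑ i ∈ I1, (lam * p * (1 - p) * ε * N * xt i ^ (p - 2) +
          lam * p * (1 - p) * N * (xt i ^ (p - 2) * |x i - x' i|))) +
        ∑ i ∈ I2, lam * p * (1 - p) * N * (xt i ^ (p - 2) * |x i - x' i|) :=
        add_le_add (Finset.sum_le_sum hbound1) (Finset.sum_le_sum hbound2)
    _ = lam * p * (1 - p) * ε * (∑ i ∈ I1, xt i ^ (p - 2)) * N +
        lam * p * (1 - p) * N * (∑ i ∈ I, xt i ^ (p - 2) * |x i - x' i|) := by
        rw [Finset.sum_add_distrib,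
          hB (fun i => xt i ^ (p - 2) * |x i - x' i|),
          ← Finset.mul_sum, ← Finset.mul_sum, ← Finset.mul_sum]
        ring
    _ ≤ lam * p * (1 - p) * ε * (∑ i ∈ I1, xt i ^ (p - 2)) * N +
        lam * p * (1 - p) * N *
          (Real.sqrt (∑ i ∈ I, xt i ^ (2 * (p - 2))) *
            Real.sqrt (∑ i ∈ I, (x i - x' i) ^ 2)) :=
        add_le_add_right (mul_le_mul_of_nonneg_left hCS hcoef) _
    _ = _ := by ring
end
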